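/- Let G be an undirected graph whose edges are given an arbitrary orientation, and let H be the ancillary graph with vertex set V × {0,1,2} in which each oriented edge (u,v) of G gives rise to edges (u_b, v_{b+1 mod 3}) for b ∈ {0,1,2}. If G contains no cycle (i.e., G is a forest), then for every vertex v of G and every b ≠ b' in {0,1,2}, there is no path in H from v_b to v_{b'}. -/

import Mathlib

/-- The ancillary triple-cover graph `H`: vertices are `V × ZMod 3`, and each
oriented edge `u → v` of the base graph (given by `dir`) yields the edges
`(u_b, v_{b+1})` for `b ∈ ZMod 3`. -/
def ancillary3 {V : Type} (dir : V → V → Prop) : SimpleGraph (V × ZMod 3) where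
  Adj a b := (dir a.1 b.1 ∧ b.2 = a.2 + 1) ∨ (dir b.1 a.1 ∧ a.2 = b.2 + 1)
  symm := by
    constructor
    rintro a b (⟨h1, h2⟩ | ⟨h1, h2⟩)
    · exact Or.inr ⟨h1, h2⟩
    · exact Or.inl ⟨h1, h2⟩
  loopless := by
    constructor
    rintro a (⟨-, h⟩ | ⟨-, h⟩) <;> simp at h

/-!
Give each dart `u → v` of `G` the sign `+1 ∈ ZMod 3` if it follows the orientation and `-1`
otherwise. A walk in `H` projects to a walk in `G`, and the level `b` changes along it by the
signed sum of the projected darts. In a forest every walk has the same signed sum as the unique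
path between its endpoints, because the detours it makes are traversed once in each direction;
so a closed walk has signed sum `0`, and a walk in `H` from `v_b` to `v_{b'}` forces `b = b'`.
-/

namespace SimpleGraph

variable {V A : Type*} [AddCommGroup A] {G : SimpleGraph V} (w : V → V → A)

def Walk.dartSum {u v : V} (p : G.Walk u v) : A :=
  (p.darts.map fun d => w d.fst d.snd).sum

@[simp]
lemma Walk.dartSum_nil {u : V} : (nil : G.Walk u u).dartSum w = 0 := rfl

@[simp]
lemma Walk.dartSum_cons {u x v : V} (h : G.Adj u x) (p : G.Walk x v) :
    (cons h p).dartSum w = w u x + p.dartSum w := by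
  simp [dartSum]

lemma Walk.dartSum_append {u x v : V} (p : G.Walk u x) (q : G.Walk x v) :
    (p.append q).dartSum w = p.dartSum w + q.dartSum w := by
  simp [dartSum, darts_append]

variable {w}

lemma IsAcyclic.dartSum_eq_of_isPath (hG : G.IsAcyclic)
    (hw : ∀ x y, G.Adj x y → w y x = -w x y) {u v : V} (p q : G.Walk u v) (hq : q.IsPath) :
    p.dartSum w = q.dartSum w := by
  classical
  have unique {u v : V} {p q : G.Walk u v} (hp : p.IsPath) (hq : q.IsPath) : p = q :=
    congrArg Subtype.val ((hG.subsingleton_path u v).elim ⟨p, hp⟩ ⟨q, hq⟩)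
  induction p with
  | nil => rw [unique hq .nil]
  | @cons u x v h p ih =>
    have hpath := p.toPath.property
    rw [Walk.dartSum_cons, ih _ hpath]
    by_cases hu : u ∈ p.toPath.val.support
    · -- `p.toPath` runs back through `u`; its part from `x` to `u` must be the edge `x u`.
      have hback : p.toPath.val.takeUntil u hu = .cons h.symm .nil :=
        unique (hpath.takeUntil hu) (Path.singleton h.symm).property
      have hrest : p.toPath.val.dropUntil u hu = q := unique (hpath.dropUntil hu) hq
      rw [← p.toPath.val.take_spec hu, Walk.dartSum_append, hback, hrest, Walk.dartSum_cons,
        Walk.dartSum_nil, hw u x h]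
      abel
    · rw [← unique (hpath.cons (h := h) hu) hq, Walk.dartSum_cons]

lemma IsAcyclic.dartSum_eq_zero (hG : G.IsAcyclic) (hw : ∀ x y, G.Adj x y → w y x = -w x y)
    {u : V} (p : G.Walk u u) : p.dartSum w = 0 :=
  hG.dartSum_eq_of_isPath hw p .nil .nil

end SimpleGraph

section Ancillary

open SimpleGraph

variable {V : Type} {G : SimpleGraph V} {dir : V → V → Prop}

open Classical in
noncomputable def orientSign (dir : V → V → Prop) (u v : V) : ZMod 3 :=
  if dir u v then 1 else -1

lemma orientSign_swap (horient : ∀ u v, G.Adj u v ↔ (dir u v ∨ dir v u))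
    (hone : ∀ u v, ¬ (dir u v ∧ dir v u)) (u v : V) (h : G.Adj u v) :
    orientSign dir v u = -orientSign dir u v := by
  rcases (horient u v).mp h with huv | hvu
  · have hvu : ¬ dir v u := fun hvu => hone u v ⟨huv, hvu⟩
    simp [orientSign, huv, hvu]
  · have huv : ¬ dir u v := fun huv => hone u v ⟨huv, hvu⟩
    simp [orientSign, huv, hvu]

def ancillary3Proj (hdir : ∀ u v, dir u v → G.Adj u v) : ancillary3 dir →g G where
  toFun := Prod.fst
  map_rel' := by
    rintro a c (⟨h, -⟩ | ⟨h, -⟩)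
    exacts [hdir _ _ h, (hdir _ _ h).symm]

lemma ancillary3_snd_sub_snd_of_adj (hone : ∀ u v, ¬ (dir u v ∧ dir v u))
    {a c : V × ZMod 3} (h : (ancillary3 dir).Adj a c) :
    c.2 - a.2 = orientSign dir a.1 c.1 := by
  rcases h with ⟨hac, hc⟩ | ⟨hca, ha⟩
  · simp [orientSign, hac, hc]
  · have hac : ¬ dir a.1 c.1 := fun hac => hone _ _ ⟨hac, hca⟩
    simp [orientSign, hac, ha]

lemma ancillary3_snd_sub_snd_eq_dartSum (hdir : ∀ u v, dir u v → G.Adj u v)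
    (hone : ∀ u v, ¬ (dir u v ∧ dir v u)) {a c : V × ZMod 3} (q : (ancillary3 dir).Walk a c) :
    c.2 - a.2 = (q.map (ancillary3Proj hdir)).dartSum (orientSign dir) := by
  induction q with
  | nil => simp
  | @cons a x c h q ih =>
    rw [Walk.map_cons, Walk.dartSum_cons, ← ih]
    change _ = orientSign dir a.1 x.1 + _
    rw [← ancillary3_snd_sub_snd_of_adj hone h]
    abel

end Ancillary

theorem stmt_1 {V : Type} (G : SimpleGraph V)
    (dir : V → V → Prop)
    (horient : ∀ u v, G.Adj u v ↔ (dir u v ∨ dir v u))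
    (hone : ∀ u v, ¬ (dir u v ∧ dir v u))
    (hforest : G.IsAcyclic) :
    ∀ (v : V) (b b' : ZMod 3), b ≠ b' →
      ¬ (ancillary3 dir).Reachable (v, b) (v, b') := by
  rintro v b b' hne ⟨q⟩
  have hdir : ∀ u v, dir u v → G.Adj u v := fun u v h => (horient u v).mpr (.inl h)
  have hclosed : (q.map (ancillary3Proj hdir)).dartSum (orientSign dir) = 0 :=
    hforest.dartSum_eq_zero (orientSign_swap horient hone) _
  have hlevel := ancillary3_snd_sub_snd_eq_dartSum hdir hone q
  rw [hclosed, sub_eq_zero] at hlevel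
  exact hne hlevel.symm
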